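/- Let N = N_{2,m} be the free 2-step nilpotent group on a₁,...,aₘ and let R = {g₁,...,g_r} with r ≤ m, where gᵢ = aᵢ^{αᵢ} cᵢ in N with αᵢ ≠ 0 and cᵢ ∈ N'. Set G = N/⟨⟨R⟩⟩. If h = a_{r+1}^{γ_{r+1}} ··· aₘ^{γₘ} c with c ∈ N' satisfies h = 1 in G, then γ_{r+1} = ... = γₘ = 0 and c lies in the subgroup generated by {[aᵢ,aⱼ] : i ≤ r or j ≤ r}. -/

import Mathlib

/-!
Let `M` be the subgroup generated by the commutators `[aᵢ,aⱼ]` with `i < r` or `j < r`. In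
class 2 it is central, hence normal, and in `N/M` every `aᵢ` with `i < r` commutes with all the
generators. So the relators `gᵢ = aᵢ^{αᵢ}cᵢ` become central in `N/M`, and the normal closure of
`R` is sent into the abelian group `{∏ gᵢ^{nᵢ}}`: `h ≡ ∏ gᵢ^{nᵢ} (mod M)`. Abelianizing to `ℤᵐ`
gives `γ = ∑ nᵢαᵢeᵢ`; this forces `γₖ = 0` for `k ≥ r`, and `nᵢαᵢ = γᵢ = 0`, so `n = 0`.
Then `h ≡ 1 (mod M)` with `h = c`.
-/

/-- The commutator `[x,y] = x⁻¹y⁻¹xy`. -/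
def grpComm {G : Type*} [Group G] (x y : G) : G := x⁻¹ * y⁻¹ * x * y

open Subgroup
open scoped IsMulCommutative commutatorElement

theorem grpComm_eq_one_iff {G : Type*} [Group G] {x y : G} : grpComm x y = 1 ↔ Commute x y := by
  rw [show grpComm x y = (y * x)⁻¹ * (x * y) by simp [grpComm, mul_assoc], inv_mul_eq_one,
    eq_comm]
  rfl

theorem map_grpComm {G H : Type*} [Group G] [Group H] (f : G →* H) (x y : G) :
    f (grpComm x y) = grpComm (f x) (f y) := by
  simp [grpComm]

theorem Subgroup.normal_of_le_center {G : Type*} [Group G] {H : Subgroup G}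
    (h : H ≤ center G) : H.Normal :=
  ⟨fun n hn g => by rwa [mem_center_iff.1 (h hn) g, mul_inv_cancel_right]⟩

theorem Subgroup.mem_center_of_forall_commute {G : Type*} [Group G] {s : Set G}
    (hs : closure s = ⊤) {x : G} (hx : ∀ y ∈ s, Commute y x) : x ∈ center G := by
  rw [center_eq_iInf hs]
  simp only [mem_iInf, mem_centralizer_singleton_iff]
  exact fun y hy => (hx y hy).symm.eq

theorem Subgroup.closure_range_comp_eq_top {G H ι : Type*} [Group G] [Group H] {f : G →* H}
    (hf : Function.Surjective f) {a : ι → G} (h : closure (Set.range a) = ⊤) :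
    closure (Set.range (f ∘ a)) = ⊤ := by
  rw [Set.range_comp, ← MonoidHom.map_closure, h, map_top_of_surjective f hf]

theorem QuotientGroup.mk_mem_center {G : Type*} [Group G] {M : Subgroup G} [M.Normal] {x : G}
    (hx : x ∈ center G) : (x : G ⧸ M) ∈ center (G ⧸ M) :=
  mem_center_iff.2 fun y =>
    QuotientGroup.induction_on y fun y => congrArg _ (mem_center_iff.1 hx y)

theorem Subgroup.exists_eq_prod_zpow_of_mem_normalClosure {G ι : Type*} [Group G] [Fintype ι]
    {g : ι → G} (hg : ∀ i, g i ∈ center G) {x : G} (hx : x ∈ normalClosure (Set.range g)) :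
    ∃ n : ι → ℤ, x = ((∏ i, (⟨g i, hg i⟩ : center G) ^ n i : center G) : G) := by
  set K := (closure (Set.range fun i => (⟨g i, hg i⟩ : center G))).map (center G).subtype
  have : K.Normal := normal_of_le_center (map_subtype_le _)
  have hK : normalClosure (Set.range g) ≤ K := by
    refine normalClosure_le_normal ?_
    rintro _ ⟨i, rfl⟩
    exact ⟨_, subset_closure ⟨i, rfl⟩, rfl⟩
  obtain ⟨y, hy, rfl⟩ := hK hx
  obtain ⟨n, rfl⟩ := mem_closure_range_iff_of_fintype.1 hy
  exact ⟨n, rfl⟩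

theorem Fin.sum_ite_castLE_eq {M : Type*} [AddCommMonoid M] {m r : ℕ} (hr : r ≤ m)
    (v : Fin r → M) (k : Fin m) :
    (∑ i, if Fin.castLE hr i = k then v i else 0) = if h : (k : ℕ) < r then v ⟨k, h⟩ else 0 := by
  split_ifs with h
  · rw [Finset.sum_eq_single ⟨k, h⟩ (fun i _ hi => if_neg fun hik => hi (by ext; simp [← hik]))
      (by simp), if_pos (by ext; simp)]
  · exact Finset.sum_eq_zero fun i _ => if_neg fun hik => h (by simp [← hik])

section ClassTwo

variable {N : Type*} [Group N] (h2 : ∀ x y z : N, grpComm x (grpComm y z) = 1)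
include h2

theorem grpComm_mem_center (x y : N) : grpComm x y ∈ center N :=
  mem_center_iff.2 fun z => grpComm_eq_one_iff.1 (h2 z x y)

theorem commutator_le_center : commutator N ≤ center N := by
  rw [commutator_eq_closure, closure_le]
  rintro _ ⟨x, y, rfl⟩
  rw [show ⁅x, y⁆ = grpComm x⁻¹ y⁻¹ by simp [commutatorElement_def, grpComm]]
  exact grpComm_mem_center h2 _ _

end ClassTwo

section MixedCommutators

variable {m : ℕ} {N : Type*} [Group N] (a : Fin m → N) (r : ℕ)

def mixedCommutators : Subgroup N :=
  closure {x | ∃ i j : Fin m, ((i : ℕ) < r ∨ (j : ℕ) < r) ∧ x = grpComm (a i) (a j)}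

variable {a r}

theorem mixedCommutators_le_center (h2 : ∀ x y z : N, grpComm x (grpComm y z) = 1) :
    mixedCommutators a r ≤ center N :=
  (closure_le _).2 <| by
    rintro _ ⟨i, j, -, rfl⟩
    exact grpComm_mem_center h2 _ _

theorem mixedCommutators_le_ker {A : Type*} [CommGroup A] (f : N →* A) :
    mixedCommutators a r ≤ f.ker :=
  (closure_le _).2 <| by
    rintro _ ⟨i, j, -, rfl⟩
    simp [grpComm, mul_comm]

theorem mk_generator_mem_center [(mixedCommutators a r).Normal]
    (hgen : closure (Set.range a) = ⊤) {i : Fin m} (hi : (i : ℕ) < r) :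
    (a i : N ⧸ mixedCommutators a r) ∈ center (N ⧸ mixedCommutators a r) := by
  refine mem_center_of_forall_commute
    (closure_range_comp_eq_top (QuotientGroup.mk'_surjective _) hgen) ?_
  rintro _ ⟨j, rfl⟩
  refine grpComm_eq_one_iff.1 <| (map_grpComm (QuotientGroup.mk' _) _ _).symm.trans ?_
  exact (QuotientGroup.eq_one_iff _).2 <| subset_closure ⟨j, i, Or.inr hi, rfl⟩

theorem mk_zpow_mul_mem_center [(mixedCommutators a r).Normal]
    (h2 : ∀ x y z : N, grpComm x (grpComm y z) = 1) (hgen : closure (Set.range a) = ⊤)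
    {i : Fin m} (hi : (i : ℕ) < r) (k : ℤ) {c : N} (hc : c ∈ commutator N) :
    ((a i ^ k * c : N) : N ⧸ mixedCommutators a r) ∈ center (N ⧸ mixedCommutators a r) :=
  mul_mem (zpow_mem (mk_generator_mem_center hgen hi) _)
    (QuotientGroup.mk_mem_center (commutator_le_center h2 hc))

theorem map_finRange_prod_zpow {π : N →* Multiplicative (Fin m → ℤ)}
    (hπ : ∀ i, π (a i) = .ofAdd (Pi.single i 1)) (γ : Fin m → ℤ) :
    π ((List.finRange m).map fun i => a i ^ γ i).prod = .ofAdd γ := by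
  simp only [map_list_prod, List.map_map, Function.comp_def, map_zpow, hπ, ← Fin.prod_univ_def]
  apply Multiplicative.toAdd.injective
  simp only [toAdd_prod, toAdd_zpow, toAdd_ofAdd, ← Pi.single_smul', smul_eq_mul, mul_one,
    Finset.univ_sum_single]

end MixedCommutators

/-- Let `N` be the free 2-step nilpotent group on `a₁, …, aₘ` (characterized by
its universal property), `R = {aᵢ^{αᵢ}cᵢ : i ≤ r}` with `αᵢ ≠ 0`, `cᵢ ∈ N'`,
`r ≤ m`, and `G = N/⟨⟨R⟩⟩`. If `h = a_{r+1}^{γ_{r+1}} ⋯ aₘ^{γₘ} c` with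
`c ∈ N'` is trivial in `G` (i.e. `h` lies in the normal closure of `R`), then
all `γᵢ = 0` and `c` lies in the subgroup generated by the commutators
`[aᵢ,aⱼ]` with `i ≤ r` or `j ≤ r`. -/
theorem stmt_16 (m r : ℕ) (hr : r ≤ m) (N : Type) [Group N] (a : Fin m → N)
    (h2 : ∀ x y z : N, grpComm x (grpComm y z) = 1)
    (hgen : Subgroup.closure (Set.range a) = ⊤)
    (hfree : ∀ (H : Type) (_ : Group H),
      (∀ x y z : H, grpComm x (grpComm y z) = 1) →
      ∀ b : Fin m → H, ∃ φ : N →* H, ∀ i, φ (a i) = b i)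
    (α : Fin r → ℤ) (hα : ∀ i, α i ≠ 0)
    (cR : Fin r → N) (hcR : ∀ i, cR i ∈ commutator N)
    (γ : Fin m → ℤ) (hγ : ∀ i : Fin m, (i : ℕ) < r → γ i = 0)
    (c : N) (hc : c ∈ commutator N)
    (hh : ((List.finRange m).map fun i => a i ^ γ i).prod * c ∈
      Subgroup.normalClosure
        (Set.range fun i : Fin r => a (Fin.castLE hr i) ^ α i * cR i)) :
    (∀ i, γ i = 0) ∧
      c ∈ Subgroup.closure
        {x : N | ∃ i j : Fin m, ((i : ℕ) < r ∨ (j : ℕ) < r) ∧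
          x = grpComm (a i) (a j)} := by
  set M := mixedCommutators a r
  have : M.Normal := normal_of_le_center (mixedCommutators_le_center h2)
  let q := QuotientGroup.mk' M
  have hcentral (i : Fin r) : q (a (Fin.castLE hr i) ^ α i * cR i) ∈ center (N ⧸ M) :=
    mk_zpow_mul_mem_center h2 hgen (by simp) (α i) (hcR i)
  obtain ⟨n, hn⟩ := exists_eq_prod_zpow_of_mem_normalClosure hcentral <| by
    rw [Set.range_comp', ← map_normalClosure _ _ (QuotientGroup.mk'_surjective M)]
    exact mem_map_of_mem q hh
  obtain ⟨π, hπ⟩ := hfree (Multiplicative (Fin m → ℤ)) inferInstance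
    (fun x y z => by simp [grpComm, mul_comm]) (fun i => .ofAdd (Pi.single i 1))
  have hcoord (k : Fin m) : γ k = if h : (k : ℕ) < r then n ⟨k, h⟩ * α ⟨k, h⟩ else 0 := by
    rw [← Fin.sum_ite_castLE_eq hr (fun i => n i * α i)]
    let π' := QuotientGroup.lift M π (mixedCommutators_le_ker π)
    have := congrArg π' hn
    change _ = (π'.comp (center _).subtype) _ at this
    simp only [π', map_prod, map_zpow, MonoidHom.comp_apply, coe_subtype, q,
      QuotientGroup.mk'_apply, QuotientGroup.lift_mk, map_mul, map_finRange_prod_zpow hπ, hπ,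
      π.mem_ker.1 (Abelianization.commutator_subset_ker π (hcR _)),
      π.mem_ker.1 (Abelianization.commutator_subset_ker π hc), mul_one] at this
    simpa [Finset.sum_apply, Pi.single_apply, eq_comm (a := k)] using
      congrFun (congrArg Multiplicative.toAdd this) k
  have hn0 (i : Fin r) : n i = 0 := by
    simpa [hγ, hα] using hcoord (Fin.castLE hr i)
  have hγ0 (k : Fin m) : γ k = 0 := by
    by_cases hk : (k : ℕ) < r
    · exact hγ k hk
    · simpa [hk] using hcoord k
  refine ⟨hγ0, show c ∈ M from (QuotientGroup.eq_one_iff c).1 ?_⟩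
  simpa [hγ0, hn0, q] using hn
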